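/- Let A be a k-algebra over a field k. Then A° ≅ k as coalgebras if and only if A admits an augmentation A → k and every finite-dimensional A-module is a direct sum of copies of the module k. -/

import Mathlib

open TensorProduct

universe u

section MeasuringPreamble

variable {k : Type u} [CommRing k]

/-- The convolution product of two linear maps `C →ₗ[k] B` from a coalgebra `C` to an
algebra `B`: `f * g = μ_B ∘ (f ⊗ g) ∘ Δ_C`. -/
noncomputable def convMulL {C B : Type u} [AddCommGroup C] [Module k C] [Coalgebra k C]
    [Ring B] [Algebra k B] (f g : C →ₗ[k] B) : C →ₗ[k] B :=
  LinearMap.mul' k B ∘ₗ TensorProduct.map f g ∘ₗ Coalgebra.comul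

/-- The convolution unit `ι_B ∘ ε_C : C →ₗ[k] B`. -/
noncomputable def convOneL {C B : Type u} [AddCommGroup C] [Module k C] [Coalgebra k C]
    [Ring B] [Algebra k B] : C →ₗ[k] B :=
  Algebra.linearMap k B ∘ₗ Coalgebra.counit

/-- `φ : A →ₗ[k] Hom_k(C,B)` is a measuring, i.e. an algebra morphism from `A` to the
convolution algebra `Hom_k(C,B)`. -/
def IsMeasuring {A C B : Type u} [Ring A] [Algebra k A] [AddCommGroup C] [Module k C]
    [Coalgebra k C] [Ring B] [Algebra k B] (φ : A →ₗ[k] C →ₗ[k] B) : Prop :=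
  φ 1 = convOneL (k := k) ∧ ∀ a a' : A, φ (a * a') = convMulL (φ a) (φ a')

/-- Restriction of a measuring along a linear map `g : C →ₗ[k] C'`. -/
noncomputable def measRestrict {A C C' B : Type u} [Ring A] [Algebra k A]
    [AddCommGroup C] [Module k C] [AddCommGroup C'] [Module k C']
    [Ring B] [Algebra k B]
    (g : C →ₗ[k] C') (φ : A →ₗ[k] C' →ₗ[k] B) : A →ₗ[k] C →ₗ[k] B :=
  ((LinearMap.llcomp k C C' B).flip g).comp φ

/-- `(P, e)` is a universal measuring coalgebra for the algebras `A` and `B`: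
for every coalgebra `C`, measurings `A →ₗ[k] Hom_k(C,B)` (i.e. algebra morphisms into
the convolution algebra) are in bijection with coalgebra morphisms `C →ₗc[k] P`,
naturally in `C`. -/
structure IsUniversalMeasuring (A B P : Type u) [Ring A] [Algebra k A]
    [Ring B] [Algebra k B] [AddCommGroup P] [Module k P] [Coalgebra k P] where
  equiv : ∀ (C : Type u) [AddCommGroup C] [Module k C] [Coalgebra k C],
    {φ : A →ₗ[k] C →ₗ[k] B // IsMeasuring φ} ≃ (C →ₗc[k] P)
  naturality : ∀ (C C' : Type u) [AddCommGroup C] [Module k C] [Coalgebra k C]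
    [AddCommGroup C'] [Module k C'] [Coalgebra k C'] (g : C →ₗc[k] C')
    (φ : {φ : A →ₗ[k] C' →ₗ[k] B // IsMeasuring φ})
    (h : IsMeasuring (measRestrict g.toLinearMap φ.1)),
    equiv C ⟨measRestrict g.toLinearMap φ.1, h⟩ =
      (equiv C' φ).comp g

end MeasuringPreamble

/-!
Since `k` is the terminal coalgebra, `A° ≅ k` exactly when every coalgebra `C` carries exactly
one measuring `A → C^*`. A measuring into `k^* = k` is an augmentation `ε`, so this says that every
measuring is `a ↦ ε(a) • counit`. Measurings into the comatrix coalgebra are the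
finite-dimensional representations of `A`, so then `A` acts on every finite-dimensional module
through `ε`. Conversely, a measuring `φ` makes `C` an `A`-module via `a • x = ∑ φ(a)(x₍₂₎) x₍₁₎`,
in which every `x` generates a finite-dimensional submodule; there `a` acts as `ε(a)`, and
applying the counit gives `φ(a)(x) = ε(a) counit(x)`.
-/

open Coalgebra WithConv

section Measuring

variable {k : Type u} [CommRing k] {A C : Type u} [Ring A] [Algebra k A]
  [AddCommGroup C] [Module k C] [Coalgebra k C]

noncomputable def trivialMeasuring (aug : A →ₐ[k] k) : A →ₗ[k] C →ₗ[k] k :=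
  aug.toLinearMap.smulRight convOneL

@[simp] lemma trivialMeasuring_apply (aug : A →ₐ[k] k) (a : A) (x : C) :
    trivialMeasuring aug a x = aug a * counit x := rfl

lemma isMeasuring_trivialMeasuring (aug : A →ₐ[k] k) :
    IsMeasuring (trivialMeasuring (C := C) aug) := by
  refine ⟨by simp [trivialMeasuring], fun a a' => congrArg ofConv ?_⟩
  change aug (a * a') • (1 : WithConv (C →ₗ[k] k)) = (aug a • 1) * (aug a' • 1)
  rw [map_mul, smul_mul_smul_comm, one_mul]

noncomputable def IsMeasuring.evalAlgHom {B : Type u} [Ring B] [Algebra k B]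
    {φ : A →ₗ[k] C →ₗ[k] B} (hφ : IsMeasuring φ) {g : C} (hg : IsGroupLikeElem k g) :
    A →ₐ[k] B :=
  AlgHom.ofLinearMap (φ.flip g) (by simp [hφ.1, convOneL, hg.counit_eq_one])
    (fun a a' => by simp [hφ.2, convMulL, hg.comul_eq_tmul_self])

def MeasuringsAreTrivial (aug : A →ₐ[k] k) : Prop :=
  ∀ (C : Type u) [AddCommGroup C] [Module k C] [Coalgebra k C] (φ : A →ₗ[k] C →ₗ[k] k),
    IsMeasuring φ → φ = trivialMeasuring aug

end Measuring

theorem IsUniversalMeasuring.nonempty_coalgEquiv_iff {k : Type u} [CommRing k] {A : Type u}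
    [Ring A] [Algebra k A] {P : Type u} [AddCommGroup P] [Module k P] [Coalgebra k P]
    (hP : IsUniversalMeasuring (k := k) A k P) :
    Nonempty (P ≃ₗc[k] k) ↔ ∃ aug : A →ₐ[k] k, MeasuringsAreTrivial aug := by
  constructor
  · rintro ⟨e⟩
    have hsub (C : Type u) [AddCommGroup C] [Module k C] [Coalgebra k C] :
        Subsingleton {φ : A →ₗ[k] C →ₗ[k] k // IsMeasuring φ} :=
      ⟨fun φ ψ => (hP.equiv C).injective <| CoalgHom.ext fun x => e.injective <|
        CoalgHom.congr_fun (Subsingleton.elim ((e : P →ₗc[k] k).comp (hP.equiv C φ))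
          ((e : P →ₗc[k] k).comp (hP.equiv C ψ))) x⟩
    refine ⟨((hP.equiv k).symm e.symm).2.evalAlgHom .one, fun C _ _ _ φ hφ => ?_⟩
    exact congrArg Subtype.val (Subsingleton.elim (α := {φ // IsMeasuring φ}) ⟨φ, hφ⟩
      ⟨_, isMeasuring_trivialMeasuring _⟩)
  · rintro ⟨aug, haug⟩
    have hsub (C : Type u) [AddCommGroup C] [Module k C] [Coalgebra k C] :
        Subsingleton (C →ₗc[k] P) :=
      (hP.equiv C).subsingleton_congr.1
        ⟨fun φ ψ => Subtype.ext ((haug C φ.1 φ.2).trans (haug C ψ.1 ψ.2).symm)⟩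
    exact ⟨.ofCoalgHom (counitCoalgHom k P) (hP.equiv k ⟨_, isMeasuring_trivialMeasuring aug⟩)
      (Subsingleton.elim _ _) (Subsingleton.elim _ _)⟩

section Hit

variable {k : Type u} [CommRing k] {C : Type u} [AddCommGroup C] [Module k C] [Coalgebra k C]

noncomputable def hit : (C →ₗ[k] k) →ₗ[k] Module.End k C where
  toFun f := (TensorProduct.rid k C).toLinearMap ∘ₗ f.lTensor C ∘ₗ comul
  map_add' f g := by simp [LinearMap.lTensor_add, LinearMap.add_comp, LinearMap.comp_add]
  map_smul' c f := by simp [LinearMap.lTensor_smul, LinearMap.smul_comp, LinearMap.comp_smul]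

lemma hit_apply (f : C →ₗ[k] k) (x : C) :
    hit f x = TensorProduct.rid k C (f.lTensor C (comul x)) := rfl

lemma counit_hit (f : C →ₗ[k] k) (x : C) : counit (hit f x) = f x := by
  have h : counit ∘ₗ (TensorProduct.rid k C).toLinearMap ∘ₗ f.lTensor C =
      f ∘ₗ (TensorProduct.lid k C).toLinearMap ∘ₗ (counit : C →ₗ[k] k).rTensor C := by
    ext x y; simp [mul_comm]
  simpa [hit_apply, rTensor_counit_comul] using congr($h (comul x))

lemma hit_mem_span (f : C →ₗ[k] k) {x : C} {ι : Type*} (r : Repr k x ι) :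
    hit f x ∈ Submodule.span k (r.left '' r.index) := by
  rw [hit_apply, ← r.eq]
  simp only [map_sum, LinearMap.lTensor_tmul, TensorProduct.rid_tmul]
  exact Submodule.sum_mem _ fun i hi =>
    Submodule.smul_mem _ _ (Submodule.subset_span ⟨i, hi, rfl⟩)

lemma hit_convOneL : hit (convOneL (k := k) (C := C) (B := k)) = 1 := by
  ext x
  simp [hit_apply, convOneL, lTensor_counit_comul]

lemma hit_convMulL (f g : C →ₗ[k] k) : hit (convMulL f g) = hit f * hit g := by
  have hcomul : comul ∘ₗ (TensorProduct.rid k C).toLinearMap ∘ₗ g.lTensor C =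
      (TensorProduct.rid k (C ⊗[k] C)).toLinearMap ∘ₗ g.lTensor (C ⊗[k] C) ∘ₗ
        (comul : C →ₗ[k] C ⊗[k] C).rTensor C := by
    ext x y; simp
  have hpair : (TensorProduct.rid k C).toLinearMap ∘ₗ f.lTensor C ∘ₗ
      (TensorProduct.rid k (C ⊗[k] C)).toLinearMap ∘ₗ g.lTensor (C ⊗[k] C) =
      (TensorProduct.rid k C).toLinearMap ∘ₗ
        (LinearMap.mul' k k ∘ₗ TensorProduct.map f g).lTensor C ∘ₗ
        (TensorProduct.assoc k C C C).toLinearMap := by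
    ext x y z; simp [smul_smul, mul_comm]
  refine LinearMap.ext fun x => ?_
  calc hit (convMulL f g) x
      = TensorProduct.rid k C ((LinearMap.mul' k k ∘ₗ TensorProduct.map f g).lTensor C
          (TensorProduct.assoc k C C C ((comul : C →ₗ[k] C ⊗[k] C).rTensor C
            (comul x)))) := by
        rw [coassoc_apply, ← LinearMap.lTensor_comp_apply]; rfl
    _ = (hit f * hit g) x := by
        have h₁ := congr($hpair ((comul : C →ₗ[k] C ⊗[k] C).rTensor C (comul x)))
        have h₂ := congr($hcomul (comul x))
        simp only [LinearMap.comp_apply, LinearEquiv.coe_coe] at h₁ h₂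
        rw [← h₁, ← h₂]; rfl

noncomputable def IsMeasuring.hitAction {A : Type u} [Ring A] [Algebra k A]
    {φ : A →ₗ[k] C →ₗ[k] k} (hφ : IsMeasuring φ) : A →ₐ[k] Module.End k C :=
  AlgHom.ofLinearMap (hit ∘ₗ φ) (by simp [hφ.1, hit_convOneL])
    (fun a a' => by simp [hφ.2, hit_convMulL])

end Hit

section MatrixCoalgebra

open Matrix

variable (k : Type u) [CommRing k] (n : Type*) [Fintype n] [DecidableEq n]

noncomputable def matrixComul : Matrix n n k →ₗ[k] Matrix n n k ⊗[k] Matrix n n k :=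
  (stdBasis k n n).constr k fun p => ∑ l, single p.1 l (1 : k) ⊗ₜ single l p.2 (1 : k)

variable {k n} in
lemma matrixComul_single (i j : n) :
    matrixComul k n (single i j 1) = ∑ l, single i l (1 : k) ⊗ₜ single l j (1 : k) := by
  rw [← stdBasis_eq_single, matrixComul, Module.Basis.constr_basis]

variable {k n} in
lemma _root_.Matrix.trace_single_one (i j : n) :
    trace (single i j (1 : k)) = if i = j then 1 else 0 := by
  split_ifs with h
  · rw [h, trace_single_eq_same]
  · exact trace_single_eq_of_ne i j 1 h

/-- The comatrix coalgebra: its dual algebra is `Matrix n n k`. -/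
noncomputable abbrev matrixCoalgebra : Coalgebra k (Matrix n n k) where
  comul := matrixComul k n
  counit := traceLinearMap n k k
  coassoc := (stdBasis k n n).ext fun ⟨i, j⟩ => by
    dsimp only [LinearMap.comp_apply, LinearEquiv.coe_coe]
    rw [stdBasis_eq_single, matrixComul_single]
    simp [matrixComul_single, tmul_sum, sum_tmul]
    exact Finset.sum_comm
  rTensor_counit_comp_comul := (stdBasis k n n).ext fun ⟨i, j⟩ => by
    dsimp only [LinearMap.comp_apply]
    rw [stdBasis_eq_single, matrixComul_single]
    simp [trace_single_one, ite_tmul]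
  lTensor_counit_comp_comul := (stdBasis k n n).ext fun ⟨i, j⟩ => by
    dsimp only [LinearMap.comp_apply]
    rw [stdBasis_eq_single, matrixComul_single]
    simp [trace_single_one, tmul_ite]

attribute [local instance] matrixCoalgebra

variable {k n}

lemma matrixCoalgebra_comul_single (i j : n) :
    comul (R := k) (single i j (1 : k)) = ∑ l, single i l (1 : k) ⊗ₜ single l j (1 : k) :=
  matrixComul_single i j

lemma matrixCoalgebra_counit (c : Matrix n n k) : counit (R := k) c = trace c := rfl

end MatrixCoalgebra

section RepresentationMeasuring

open Matrix

variable {k : Type u} [CommRing k] {A : Type u} [Ring A] [Algebra k A]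
  {n : Type} [Fintype n] [DecidableEq n]

attribute [local instance] matrixCoalgebra

noncomputable def representationMeasuring (ρ : A →ₐ[k] Matrix n n k) :
    A →ₗ[k] Matrix n n k →ₗ[k] k :=
  (stdBasis k n n).toDual ∘ₗ ρ.toLinearMap

lemma representationMeasuring_single (ρ : A →ₐ[k] Matrix n n k) (a : A) (i j : n) :
    representationMeasuring ρ a (single i j 1) = ρ a i j := by
  rw [← stdBasis_eq_single, representationMeasuring, LinearMap.comp_apply,
    Module.Basis.toDual_apply_left]
  simp [stdBasis]

lemma isMeasuring_representationMeasuring (ρ : A →ₐ[k] Matrix n n k) :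
    IsMeasuring (representationMeasuring ρ) := by
  refine ⟨(stdBasis k n n).ext fun ⟨i, j⟩ => ?_,
    fun a a' => (stdBasis k n n).ext fun ⟨i, j⟩ => ?_⟩
  · simp [stdBasis_eq_single, representationMeasuring_single, convOneL, matrixCoalgebra_counit,
      trace_single_one, one_apply]
  · simp [stdBasis_eq_single, representationMeasuring_single, convMulL,
      matrixCoalgebra_comul_single, mul_apply]

end RepresentationMeasuring

lemma MeasuringsAreTrivial.apply_eq_algebraMap {k : Type u} [CommRing k] {A : Type u} [Ring A]
    [Algebra k A] {aug : A →ₐ[k] k} (hT : MeasuringsAreTrivial aug) {n : Type} [Fintype n]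
    [DecidableEq n] (ρ : A →ₐ[k] Matrix n n k) (a : A) : ρ a = algebraMap k _ (aug a) := by
  let := matrixCoalgebra k n
  have h := hT _ _ (isMeasuring_representationMeasuring ρ)
  ext i j
  simpa [representationMeasuring_single, matrixCoalgebra_counit, Matrix.trace_single_one,
    Matrix.algebraMap_matrix_apply] using congr($h a (Matrix.single i j 1))

section Modules

variable {k : Type u} [Field k] {A : Type u} [Ring A] [Algebra k A] {aug : A →ₐ[k] k}

lemma MeasuringsAreTrivial.smul_eq (hT : MeasuringsAreTrivial aug) (M : Type u)
    [AddCommGroup M] [Module k M] [Module A M] [IsScalarTower k A M] [FiniteDimensional k M]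
    (a : A) (m : M) : a • m = aug a • m := by
  let toMatrix := LinearMap.toMatrixAlgEquiv (Module.finBasis k M)
  have h : Algebra.lsmul k k M a = algebraMap k _ (aug a) := toMatrix.injective <| by
    simpa using hT.apply_eq_algebraMap (toMatrix.toAlgHom.comp (Algebra.lsmul k k M)) a
  simpa using congr($h m)

lemma measuringsAreTrivial_of_smul_eq
    (h : ∀ (M : Type u) [AddCommGroup M] [Module k M] [Module A M] [IsScalarTower k A M]
      [FiniteDimensional k M] (a : A) (m : M), a • m = aug a • m) :
    MeasuringsAreTrivial aug := by
  intro C _ _ _ φ hφ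
  let : Module A C := Module.compHom C hφ.hitAction.toRingHom
  have hsmul (a : A) (x : C) : a • x = hit (φ a) x := rfl
  have : IsScalarTower k A C := ⟨fun c a x => by simp [hsmul]⟩
  ext a x
  let N := Submodule.span A {x}
  have hN : N.restrictScalars k ≤ Submodule.span k ((ℛ k x).left '' (ℛ k x).index) := by
    intro y hy
    obtain ⟨b, rfl⟩ := Submodule.mem_span_singleton.1 hy
    exact hit_mem_span _ _
  have := FiniteDimensional.span_of_finite k ((ℛ k x).index.finite_toSet.image (ℛ k x).left)
  have : FiniteDimensional k (N.restrictScalars k) := Submodule.finiteDimensional_of_le hN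
  have : FiniteDimensional k N := ‹FiniteDimensional k (N.restrictScalars k)›
  have hx : a • x = aug a • x :=
    congrArg Subtype.val (h N a ⟨x, Submodule.mem_span_singleton_self x⟩)
  calc φ a x = counit (a • x) := (counit_hit _ _).symm
    _ = trivialMeasuring aug a x := by simp [hx]

lemma exists_linearEquiv_pi_iff_smul_eq (M : Type u) [AddCommGroup M] [Module k M] [Module A M]
    [IsScalarTower k A M] [FiniteDimensional k M] :
    (∃ n : ℕ, letI : Module A k := Module.compHom k aug.toRingHom
      Nonempty (M ≃ₗ[A] (Fin n → k))) ↔ ∀ (a : A) (m : M), a • m = aug a • m := by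
  let : Module A k := Module.compHom k aug.toRingHom
  have hpi (n : ℕ) (a : A) (v : Fin n → k) : a • v = aug a • v := rfl
  have halg (n : ℕ) (c : k) (v : Fin n → k) : algebraMap k A c • v = c • v := by
    rw [hpi, aug.commutes, Algebra.algebraMap_self_apply]
  constructor
  · rintro ⟨n, ⟨e⟩⟩ a m
    rw [← e.symm_apply_apply m, ← map_smul, hpi, ← halg, map_smul, algebraMap_smul]
  · intro h
    let b := Module.finBasis k M
    refine ⟨_, ⟨{ b.equivFun with map_smul' := fun a m => ?_ }⟩⟩
    change b.equivFun (a • m) = a • b.equivFun m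
    rw [h, map_smul, hpi]

end Modules

/-- Let `A` be an algebra over a field `k` and `Adual` its finite dual coalgebra (the
universal measuring coalgebra `P(A,k)`, characterized by
`Alg_k(A, C^*) ≅ Coalg_k(C, Adual)`).  Then `Adual ≅ k` as coalgebras if and only if `A`
admits an augmentation `A → k` and every finite-dimensional `A`-module is a direct sum
of copies of the module `k` (with `A` acting through the augmentation). -/
theorem finiteDual_iso_base_iff
    {k : Type u} [Field k] {A : Type u} [Ring A] [Algebra k A]
    (Adual : Type u) [AddCommGroup Adual] [Module k Adual] [Coalgebra k Adual]
    (hAdual : IsUniversalMeasuring (k := k) A k Adual) :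
    Nonempty (Adual ≃ₗc[k] k) ↔
      ∃ aug : A →ₐ[k] k,
        ∀ (M : Type u) [AddCommGroup M] [Module k M] [Module A M]
          [IsScalarTower k A M] [FiniteDimensional k M],
          ∃ n : ℕ,
            letI : Module A k := Module.compHom k aug.toRingHom
            Nonempty (M ≃ₗ[A] (Fin n → k)) := by
  rw [hAdual.nonempty_coalgEquiv_iff]
  refine exists_congr fun aug => ⟨fun hT M _ _ _ _ _ => ?_, fun h => ?_⟩
  · exact (exists_linearEquiv_pi_iff_smul_eq M).2 (hT.smul_eq M)
  · exact measuringsAreTrivial_of_smul_eq fun M _ _ _ _ _ =>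
      (exists_linearEquiv_pi_iff_smul_eq M).1 (h M)
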